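/- Equivariance of the full Multihead Attention Block in its first argument: for all X ∈ ℝ^{n×d}, Y ∈ ℝ^{m×d}, and every permutation σ of {1,…,n}, MAB(Π_σ X, Y) = Π_σ MAB(X, Y). -/

import Mathlib

open Matrix

/-- The `n × n` permutation matrix of `σ`: `(permMat σ * X) i j = X (σ i) j`,
i.e. row `i` of `Π_σ X` is row `σ(i)` of `X`. -/
noncomputable def permMat {n : ℕ} (σ : Equiv.Perm (Fin n)) : Matrix (Fin n) (Fin n) ℝ :=
  Matrix.of fun i j => if σ i = j then (1 : ℝ) else 0

/-- Row-wise softmax: `softmax M i j = exp (M i j) / ∑ k, exp (M i k)`. -/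
noncomputable def softmax {n m : ℕ} (M : Matrix (Fin n) (Fin m) ℝ) : Matrix (Fin n) (Fin m) ℝ :=
  Matrix.of fun i j => Real.exp (M i j) / ∑ k, Real.exp (M i k)

/-- Single-head attention: `Attn Q K V = softmax (Q Kᵀ / √d) ⬝ V`. -/
noncomputable def Attn {n m d : ℕ} (Q : Matrix (Fin n) (Fin d) ℝ)
    (K V : Matrix (Fin m) (Fin d) ℝ) : Matrix (Fin n) (Fin d) ℝ :=
  softmax ((1 / Real.sqrt d) • (Q * Kᵀ)) * V

/-- Apply a function `φ : ℝᵈ → ℝᵈ` independently to every row of a matrix. -/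
def rowMap {n d : ℕ} (φ : (Fin d → ℝ) → (Fin d → ℝ)) (X : Matrix (Fin n) (Fin d) ℝ) :
    Matrix (Fin n) (Fin d) ℝ :=
  Matrix.of fun i => φ (X i)

/-- Multihead Attention Block with row-wise maps `φ, ψ` (the LayerNorms) and `F`
(the feed-forward network): `MAB X Y = ψ(H + F(H))` where `H = φ(X + Attn(X, Y, Y))`. -/
noncomputable def MAB {n m d : ℕ} (φ ψ F : (Fin d → ℝ) → (Fin d → ℝ))
    (X : Matrix (Fin n) (Fin d) ℝ) (Y : Matrix (Fin m) (Fin d) ℝ) :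
    Matrix (Fin n) (Fin d) ℝ :=
  rowMap ψ (rowMap φ (X + Attn X Y Y) + rowMap F (rowMap φ (X + Attn X Y Y)))

lemma submatrix_id_mul {α ι κ l p : Type*} [Fintype l] [Mul α] [AddCommMonoid α]
    (M : Matrix ι l α) (N : Matrix l p α) (e : κ → ι) :
    (M * N).submatrix e id = M.submatrix e id * N :=
  rfl

section RowReindex

variable {k n m d : ℕ} (r : Fin k → Fin n)

lemma permMat_mul {α : Type*} (σ : Equiv.Perm (Fin n)) (M : Matrix (Fin n) α ℝ) :
    permMat σ * M = M.submatrix σ id := by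
  ext i j
  simp [permMat, Matrix.mul_apply]

lemma softmax_submatrix_id (M : Matrix (Fin n) (Fin m) ℝ) :
    softmax (M.submatrix r id) = (softmax M).submatrix r id :=
  rfl

lemma Attn_submatrix_id (Q : Matrix (Fin n) (Fin d) ℝ) (K V : Matrix (Fin m) (Fin d) ℝ) :
    Attn (Q.submatrix r id) K V = (Attn Q K V).submatrix r id := by
  rw [Attn, Attn, submatrix_id_mul, ← softmax_submatrix_id]
  rfl

lemma MAB_submatrix_id (φ ψ F : (Fin d → ℝ) → (Fin d → ℝ)) (X : Matrix (Fin n) (Fin d) ℝ)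
    (Y : Matrix (Fin m) (Fin d) ℝ) :
    MAB φ ψ F (X.submatrix r id) Y = (MAB φ ψ F X Y).submatrix r id := by
  rw [MAB, MAB, Attn_submatrix_id]
  -- row maps and sums commute with row reindexing definitionally
  rfl

end RowReindex

/-- The Multihead Attention Block is permutation-equivariant in its first argument:
`MAB (Π_σ X) Y = Π_σ (MAB X Y)`. -/
theorem MAB_equivariant_fst {n m d : ℕ} (φ ψ F : (Fin d → ℝ) → (Fin d → ℝ))
    (X : Matrix (Fin n) (Fin d) ℝ) (Y : Matrix (Fin m) (Fin d) ℝ) (σ : Equiv.Perm (Fin n)) :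
    MAB φ ψ F (permMat σ * X) Y = permMat σ * MAB φ ψ F X Y := by
  rw [permMat_mul, permMat_mul, MAB_submatrix_id]
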